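/- arXiv:2205.00035 — 5 statements merged into one kernel-verified Lean document; each statement's English description precedes it below -/
import Mathlib

section
/- Let f₀ : ℝ³ → ℝ be continuously differentiable with compact support and g : ℝ³ → ℝ continuously differentiable with compactly supported gradient. Then for every t > 0 and x ∈ ℝ³, the gradient in x of ∫_{ℝ³} f₀(x - t v) g(v) dv equals (1/t) ∫_{ℝ³} f₀(x - t v) ∇g(v) dv. -/
open MeasureTheory
open Metric Set InnerProductSpace
open scoped Convolution

lemma aux_const_of_fderiv_zero {E : Type*} [NormedAddCommGroup E] [NormedSpace ℝ E]
    {g : E → ℝ} (hg : Differentiable ℝ g) {s : Set E} (hs : IsOpen s)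
    (hconn : IsPreconnected s) (hd : ∀ y ∈ s, fderiv ℝ g y = 0)
    {a b : E} (ha : a ∈ s) (hb : b ∈ s) : g a = g b := by
  have hloc : ∀ y ∈ s, ∃ ε > 0, ball y ε ⊆ s ∧ ∀ z ∈ ball y ε, g z = g y := by
    intro y hy
    obtain ⟨ε, hε, hball⟩ := Metric.isOpen_iff.1 hs y hy
    refine ⟨ε, hε, hball, fun z hz => ?_⟩
    refine (convex_ball y ε).is_const_of_fderivWithin_eq_zero hg.differentiableOn
      (fun w hw => ?_) hz (mem_ball_self hε)
    rw [fderivWithin_of_isOpen isOpen_ball hw]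
    exact hd w (hball hw)
  set u : Set E := {y ∈ s | g y = g a} with hu_def
  have hu : IsOpen u := by
    rw [Metric.isOpen_iff]
    rintro y ⟨hys, hyg⟩
    obtain ⟨ε, hε, hball, hconst⟩ := hloc y hys
    exact ⟨ε, hε, fun z hz => ⟨hball hz, (hconst z hz).trans hyg⟩⟩
  have hv : IsOpen {y | g y ≠ g a} :=
    (isClosed_singleton.preimage hg.continuous).isOpen_compl
  by_contra hne
  obtain ⟨z, hz⟩ := hconn u {y | g y ≠ g a} hu hv
    (fun y hy => by by_cases h : g y = g a
                    · exact Or.inl ⟨hy, h⟩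
                    · exact Or.inr h)
    ⟨a, ha, ha, rfl⟩ ⟨b, hb, fun h => hne h.symm⟩
  exact hz.2.2 hz.2.1.2

lemma aux_compl_ball_pathconn {r : ℝ} (hr : 0 ≤ r) :
    IsPreconnected ((closedBall (0 : EuclideanSpace ℝ (Fin 3)) r)ᶜ) := by
  set E := EuclideanSpace ℝ (Fin 3)
  have hrank : 1 < Module.rank ℝ E := by
    rw [← Module.finrank_eq_rank]
    norm_cast
    show 1 < Module.finrank ℝ (EuclideanSpace ℝ (Fin 3))
    simp [finrank_euclideanSpace]
  have hmem : ∀ y : E, y ∈ (closedBall (0:E) r)ᶜ ↔ r < ‖y‖ := by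
    intro y
    simp [mem_closedBall, dist_zero_right, not_le]
  obtain ⟨a, ha⟩ : ∃ x : E, ‖x‖ = r + 1 := exists_norm_eq _ (by linarith)
  have hsphere : IsPathConnected (sphere (0:E) (r+1)) :=
    isPathConnected_sphere hrank 0 (by linarith)
  have hsub : sphere (0:E) (r+1) ⊆ (closedBall (0:E) r)ᶜ := by
    intro y hy
    rw [hmem]
    rw [mem_sphere_zero_iff_norm] at hy
    linarith
  have hamem : a ∈ sphere (0:E) (r+1) := by rwa [mem_sphere_zero_iff_norm]
  suffices hpc : IsPathConnected ((closedBall (0:E) r)ᶜ) from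
    hpc.isConnected.isPreconnected
  refine ⟨a, (hmem a).2 (by linarith), @fun b hb => ?_⟩
  rw [hmem] at hb
  have hbpos : 0 < ‖b‖ := lt_of_le_of_lt hr hb
  set c : ℝ := (r + 1) / ‖b‖ with hc
  have hcpos : 0 < c := by positivity
  set p : E := c • b with hp_def
  have hpmem : p ∈ sphere (0:E) (r+1) := by
    rw [mem_sphere_zero_iff_norm, hp_def, norm_smul, Real.norm_eq_abs, abs_of_pos hcpos, hc]
    field_simp
  have hseg : segment ℝ b p ⊆ (closedBall (0:E) r)ᶜ := by
    rintro z ⟨s, u, hs, hu, hsu, rfl⟩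
    rw [hmem]
    have hz : s • b + u • p = (s + u * c) • b := by
      rw [hp_def, smul_smul, add_smul]
    rw [hz, norm_smul, Real.norm_eq_abs]
    have h1 : 0 ≤ s + u * c := by positivity
    rw [abs_of_nonneg h1]
    have hcb : c * ‖b‖ = r + 1 := by rw [hc]; field_simp
    have : (s + u * c) * ‖b‖ = s * ‖b‖ + u * (r + 1) := by
      rw [add_mul, mul_assoc, hcb]
    rw [this]
    rcases eq_or_lt_of_le hu with h | h
    · have hs1 : s = 1 := by linarith
      rw [← h, hs1]; ring_nf; linarith
    · nlinarith [mul_nonneg hs (le_of_lt (lt_of_le_of_lt hr hb))]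
  exact ((hsphere.joinedIn a hamem p hpmem).mono hsub).trans
    (JoinedIn.of_segment_subset hseg).symm

abbrev E3 := EuclideanSpace ℝ (Fin 3)

set_option maxHeartbeats 1000000 in
/-- Dispersive identity `∇ₓ ∫ f₀(x - tv) g(v) dv = (1/t) ∫ f₀(x - tv) ∇g(v) dv`. -/
theorem stmt3 (f₀ g : EuclideanSpace ℝ (Fin 3) → ℝ)
    (hf : ContDiff ℝ 1 f₀) (hf0 : HasCompactSupport f₀)
    (hg : ContDiff ℝ 1 g) (hg0 : HasCompactSupport (gradient g))
    (t : ℝ) (ht : 0 < t) (x : EuclideanSpace ℝ (Fin 3)) :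
    gradient (fun y => ∫ v, f₀ (y - t • v) * g v) x
      = (1 / t) • ∫ v, f₀ (x - t • v) • gradient g v := by
  have ht' : t ≠ 0 := ht.ne'
  have hgd : Differentiable ℝ g := hg.differentiable one_ne_zero
  have hfderiv_g : ∀ y, fderiv ℝ g y = (toDual ℝ E3) (gradient g y) := by
    intro y
    rw [gradient, LinearIsometryEquiv.apply_symm_apply]
  have hfd0 : HasCompactSupport (fderiv ℝ g) := by
    have h1 : fderiv ℝ g = (toDual ℝ E3) ∘ (gradient g) := funext hfderiv_g
    rw [h1]
    exact hg0.comp_left (map_zero _)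
  obtain ⟨r₀, hr₀⟩ := hfd0.isCompact.isBounded.subset_closedBall 0
  set r : ℝ := max r₀ 0 with hrdef
  have hr : 0 ≤ r := le_max_right _ _
  have hzero : ∀ y : E3, r < ‖y‖ → fderiv ℝ g y = 0 := by
    intro y hy
    apply image_eq_zero_of_notMem_tsupport
    intro hmem
    have := hr₀ hmem
    rw [mem_closedBall, dist_zero_right] at this
    have : ‖y‖ ≤ r := this.trans (le_max_left _ _)
    linarith
  have hmemc : ∀ y : E3, r < ‖y‖ → y ∈ (closedBall (0:E3) r)ᶜ := by
    intro y hy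
    simp [mem_closedBall, dist_zero_right, not_le, hy]
  have hmemc' : ∀ y : E3, y ∈ (closedBall (0:E3) r)ᶜ → r < ‖y‖ := by
    intro y hy
    simpa [mem_closedBall, dist_zero_right, not_le] using hy
  obtain ⟨a, ha⟩ := exists_norm_eq E3 (show (0:ℝ) ≤ r + 1 by linarith)
  set c : ℝ := g a with hcdef
  have hconst : ∀ y : E3, r < ‖y‖ → g y = c := by
    intro y hy
    exact aux_const_of_fderiv_zero hgd (isClosed_closedBall.isOpen_compl)
      (aux_compl_ball_pathconn hr)
      (fun z hz => hzero z (hmemc' z hz))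
      (hmemc y hy) (hmemc a (by rw [ha]; linarith))
  set g₁ : E3 → ℝ := fun v => g v - c with hg₁def
  have hg₁ : ContDiff ℝ 1 g₁ := hg.sub contDiff_const
  have hg₁0 : HasCompactSupport g₁ := by
    apply HasCompactSupport.intro (isCompact_closedBall (0:E3) r)
    intro y hy
    have : r < ‖y‖ := hmemc' y hy
    simp [hg₁def, hconst y this]
  -- scaled function
  set G₁ : E3 → ℝ := fun w => g₁ (t⁻¹ • w) with hG₁def
  have hG₁smooth : ContDiff ℝ 1 G₁ := hg₁.comp (contDiff_id.const_smul t⁻¹)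
  have hG₁c : HasCompactSupport G₁ := by
    apply HasCompactSupport.intro (isCompact_closedBall (0:E3) (t * r))
    intro w hw
    have hw' : t * r < ‖w‖ := by
      simpa [mem_closedBall, dist_zero_right, not_le] using hw
    have : r < ‖t⁻¹ • w‖ := by
      rw [norm_smul, Real.norm_eq_abs, abs_of_pos (inv_pos.2 ht)]
      have h2 := mul_lt_mul_of_pos_left hw' (inv_pos.2 ht)
      rw [← mul_assoc, inv_mul_cancel₀ ht', one_mul] at h2
      exact h2
    simp only [hG₁def, hg₁def]
    rw [hconst _ this, sub_self]
  -- basic facts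
  have hfc : Continuous f₀ := hf.continuous
  have hfi : Integrable f₀ := hfc.integrable_of_hasCompactSupport hf0
  have hfloc : LocallyIntegrable f₀ (volume : Measure E3) := hfc.locallyIntegrable
  have hfin3 : Module.finrank ℝ E3 = 3 := by simp [E3, finrank_euclideanSpace]
  have habs : |((t ^ 3)⁻¹ : ℝ)| = (t ^ 3)⁻¹ := abs_of_pos (by positivity)
  have hderivG₁ : ∀ w, fderiv ℝ G₁ w = t⁻¹ • fderiv ℝ g (t⁻¹ • w) := by
    intro w
    have h1 : HasFDerivAt (fun w : E3 => t⁻¹ • w)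
        (t⁻¹ • ContinuousLinearMap.id ℝ E3) w := (hasFDerivAt_id w).const_smul t⁻¹
    have h2 : HasFDerivAt g (fderiv ℝ g (t⁻¹ • w)) (t⁻¹ • w) := (hgd _).hasFDerivAt
    have h3 := (h2.comp w h1).sub_const c
    have h4 : ((fderiv ℝ g (t⁻¹ • w)).comp (t⁻¹ • ContinuousLinearMap.id ℝ E3))
        = t⁻¹ • fderiv ℝ g (t⁻¹ • w) := by
      ext u
      simp
    simp only [hG₁def, hg₁def]
    rw [← h4]
    exact h3.fderiv
  set L := ContinuousLinearMap.mul ℝ ℝ with hL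
  have hconvd := hG₁c.hasFDerivAt_convolution_right L hfloc hG₁smooth x
  set D' := (f₀ ⋆[L.precompR E3, volume] fderiv ℝ G₁) x with hD'
  -- rewrite the function as a convolution plus a constant
  have hsmul_cancel : ∀ v : E3, t⁻¹ • t • v = v := by
    intro v
    rw [smul_smul, inv_mul_cancel₀ ht', one_smul]
  have hΦeq : (fun y : E3 => ∫ v, f₀ (y - t • v) * g v)
      = fun y => (t ^ 3)⁻¹ • (f₀ ⋆[L, volume] G₁) y
          + ((t ^ 3)⁻¹ * (∫ w, f₀ w)) * c := by
    funext y
    have int1 : Integrable (fun v => f₀ (y - t • v) * g₁ v) := by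
      apply Continuous.integrable_of_hasCompactSupport
      · exact (hfc.comp (continuous_const.sub (continuous_id.const_smul t))).mul
          (hg.continuous.sub continuous_const)
      · exact hg₁0.mul_left
    have int2 : Integrable (fun v => f₀ (y - t • v) * c) := by
      apply Integrable.mul_const
      apply Continuous.integrable_of_hasCompactSupport
      · exact hfc.comp (continuous_const.sub (continuous_id.const_smul t))
      · let φ : E3 ≃ₜ E3 :=
          (Homeomorph.smulOfNeZero (Units.mk0 t ht').val (by simp [ht'])).trans
            (Homeomorph.subLeft y)
        exact hf0.comp_homeomorph φ
    have hsplit : (∫ v, f₀ (y - t • v) * g v)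
        = (∫ v, f₀ (y - t • v) * g₁ v) + ∫ v, f₀ (y - t • v) * c := by
      rw [← integral_add int1 int2]
      congr 1
      funext v
      simp only [hg₁def]
      ring
    have hb : (∫ v, f₀ (y - t • v) * g₁ v) = (t ^ 3)⁻¹ • (f₀ ⋆[L, volume] G₁) y := by
      have e1 := MeasureTheory.Measure.integral_comp_smul (volume : Measure E3)
        (fun w => f₀ (y - w) * G₁ w) t
      rw [hfin3, habs] at e1
      have e2 : (fun v : E3 => f₀ (y - t • v) * G₁ (t • v))
          = fun v => f₀ (y - t • v) * g₁ v := by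
        funext v
        simp only [hG₁def, hsmul_cancel v]
      rw [e2] at e1
      rw [e1, convolution_eq_swap]
      rfl
    have hc2 : (∫ v, f₀ (y - t • v) * c) = ((t ^ 3)⁻¹ * (∫ w, f₀ w)) * c := by
      rw [MeasureTheory.integral_mul_const]
      congr 1
      have e1 := MeasureTheory.Measure.integral_comp_smul (volume : Measure E3)
        (fun w => f₀ (y - w)) t
      rw [hfin3, habs] at e1
      rw [e1, MeasureTheory.integral_sub_left_eq_self f₀ volume y, smul_eq_mul]
    rw [hsplit, hb, hc2]
  have hΦderiv : HasFDerivAt (fun y : E3 => ∫ v, f₀ (y - t • v) * g v)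
      ((t ^ 3)⁻¹ • D') x := by
    rw [hΦeq]
    exact (hconvd.const_smul ((t ^ 3)⁻¹)).add_const _
  -- integrability of the gradient-type integrands
  have hgradc : Continuous (gradient g) := by
    have : gradient g = fun y => (toDual ℝ E3).symm (fderiv ℝ g y) := rfl
    rw [this]
    exact (toDual ℝ E3).symm.continuous.comp (hg.continuous_fderiv one_ne_zero)
  have hint_grad : Integrable (fun v => f₀ (x - t • v) • gradient g v) := by
    apply Continuous.integrable_of_hasCompactSupport
    · exact (hfc.comp (continuous_const.sub (continuous_id.const_smul t))).smul hgradc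
    · apply HasCompactSupport.intro hg0.isCompact
      intro v hv
      rw [image_eq_zero_of_notMem_tsupport hv, smul_zero]
  have hint_fderiv : Integrable (fun v => f₀ (x - t • v) • fderiv ℝ g v) := by
    apply Continuous.integrable_of_hasCompactSupport
    · exact (hfc.comp (continuous_const.sub (continuous_id.const_smul t))).smul
        (hg.continuous_fderiv one_ne_zero)
    · apply HasCompactSupport.intro hfd0.isCompact
      intro v hv
      rw [image_eq_zero_of_notMem_tsupport hv, smul_zero]
  -- identify the derivative
  have key : (t ^ 3)⁻¹ • D' = (1 / t) • ∫ v, f₀ (x - t • v) • fderiv ℝ g v := by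
    ext u
    have happ : D' u = ∫ w, f₀ (x - w) * (fderiv ℝ G₁ w) u := by
      rw [hD', convolution_precompR_apply L hfloc (hG₁c.fderiv ℝ)
        (hG₁smooth.continuous_fderiv one_ne_zero) x u, convolution_eq_swap]
      simp [hL, ContinuousLinearMap.mul_apply']
    have hrw : (fun w => f₀ (x - w) * (fderiv ℝ G₁ w) u)
        = fun w => t⁻¹ * (f₀ (x - w) * (fderiv ℝ g (t⁻¹ • w)) u) := by
      funext w
      rw [hderivG₁ w]
      simp only [ContinuousLinearMap.smul_apply, smul_eq_mul]
      ring
    have e1 := MeasureTheory.Measure.integral_comp_smul (volume : Measure E3)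
      (fun w => f₀ (x - w) * (fderiv ℝ g (t⁻¹ • w)) u) t
    rw [hfin3, habs] at e1
    have e2 : (fun v : E3 => f₀ (x - t • v) * (fderiv ℝ g (t⁻¹ • t • v)) u)
        = fun v => f₀ (x - t • v) * (fderiv ℝ g v) u := by
      funext v
      rw [hsmul_cancel v]
    rw [e2] at e1
    -- e1 : ∫ v, f₀ (x - t•v) * fderiv g v u = (t^3)⁻¹ • ∫ w, f₀ (x-w) * fderiv g (t⁻¹•w) u
    have lhs_eq : ((t ^ 3)⁻¹ • D') u
        = (t ^ 3)⁻¹ * (t⁻¹ * ∫ w, f₀ (x - w) * (fderiv ℝ g (t⁻¹ • w)) u) := by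
      rw [ContinuousLinearMap.smul_apply, happ, hrw, MeasureTheory.integral_const_mul,
        smul_eq_mul]
    have rhs_eq : ((1 / t : ℝ) • ∫ v, f₀ (x - t • v) • fderiv ℝ g v) u
        = (1 / t) * ∫ v, f₀ (x - t • v) * (fderiv ℝ g v) u := by
      rw [ContinuousLinearMap.smul_apply, ContinuousLinearMap.integral_apply hint_fderiv,
        smul_eq_mul]
      simp only [ContinuousLinearMap.smul_apply, smul_eq_mul]
    rw [lhs_eq, rhs_eq]
    rw [smul_eq_mul] at e1
    rw [e1]
    ring
  -- conclude
  have hgradat : HasGradientAt (fun y : E3 => ∫ v, f₀ (y - t • v) * g v)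
      ((1 / t) • ∫ v, f₀ (x - t • v) • gradient g v) x := by
    rw [hasGradientAt_iff_hasFDerivAt]
    have htd : (toDual ℝ E3) ((1 / t : ℝ) • ∫ v, f₀ (x - t • v) • gradient g v)
        = (1 / t : ℝ) • ∫ v, f₀ (x - t • v) • fderiv ℝ g v := by
      rw [LinearIsometryEquiv.map_smul]
      congr 1
      have hcomm := ((toDual ℝ E3).toLinearIsometry.toContinuousLinearMap).integral_comp_comm
        hint_grad
      simp only [LinearIsometry.coe_toContinuousLinearMap,
        LinearIsometryEquiv.coe_toLinearIsometry] at hcomm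
      rw [← hcomm]
      congr 1
      funext v
      rw [LinearIsometryEquiv.map_smul, ← hfderiv_g]
    rw [htd, ← key]
    exact hΦderiv
  exact hgradat.gradient
end

section
/- For any real τ ≥ 1 and V ≥ 1, the double integral over σ ∈ [1,∞) and w ∈ ℝ² with |w| ≤ C(1+τ) of (1/(τ+σ)) · (1 + (τ+σ)/(1+|w|) + τσ/(1+|w|)²) · (1 + |w| + σV)^{-2} dσ dw is bounded by C' · (1 + log(2+τ))² for a constant C' depending only on C. -/
open MeasureTheory Set Metric Filter

noncomputable def Bc : ℝ := (volume (Metric.ball (0 : EuclideanSpace ℝ (Fin 2)) 1)).toReal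

lemma Bc_nonneg : 0 ≤ Bc := ENNReal.toReal_nonneg

/-- Polar coordinates computation for radial integrals over a ball in the plane. -/
lemma polar_ball (R : ℝ) (φ : ℝ → ℝ) :
    ∫ w in {w : EuclideanSpace ℝ (Fin 2) | ‖w‖ ≤ R}, φ ‖w‖ =
      2 * Bc * ∫ y in Set.Ioc (0:ℝ) R, y * φ y := by
  have hS : {w : EuclideanSpace ℝ (Fin 2) | ‖w‖ ≤ R}
      = (fun w : EuclideanSpace ℝ (Fin 2) => ‖w‖) ⁻¹' (Set.Iic R) := rfl
  have hSm : MeasurableSet {w : EuclideanSpace ℝ (Fin 2) | ‖w‖ ≤ R} := by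
    rw [hS]; exact measurableSet_Iic.preimage (continuous_norm.measurable)
  rw [← integral_indicator hSm]
  have h1 : ∀ w : EuclideanSpace ℝ (Fin 2),
      Set.indicator {w : EuclideanSpace ℝ (Fin 2) | ‖w‖ ≤ R} (fun w => φ ‖w‖) w
        = Set.indicator (Set.Iic R) φ ‖w‖ := by
    intro w
    by_cases h : ‖w‖ ≤ R
    · rw [Set.indicator_of_mem (by exact h) , Set.indicator_of_mem (by exact h)]
    · rw [Set.indicator_of_notMem (by exact h), Set.indicator_of_notMem (by exact h)]
  simp_rw [h1]
  rw [MeasureTheory.integral_fun_norm_addHaar volume (Set.indicator (Set.Iic R) φ)]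
  have hdim : Module.finrank ℝ (EuclideanSpace ℝ (Fin 2)) = 2 := finrank_euclideanSpace_fin
  rw [hdim]
  have h2 : ∀ y : ℝ, y ^ (2 - 1) • Set.indicator (Set.Iic R) φ y
      = Set.indicator (Set.Iic R) (fun y => y * φ y) y := by
    intro y
    by_cases h : y ∈ Set.Iic R <;> simp [h]
  simp_rw [h2]
  rw [integral_indicator measurableSet_Iic, Measure.restrict_restrict measurableSet_Iic]
  have : Set.Iic R ∩ Set.Ioi 0 = Set.Ioc (0:ℝ) R := by
    ext y; simp only [Set.mem_inter_iff, Set.mem_Iic, Set.mem_Ioi, Set.mem_Ioc]; tauto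
  rw [this]
  simp [Bc, smul_eq_mul, Measure.real]
  ring

lemma integral_inv_one_add {R : ℝ} (hR : 0 ≤ R) :
    ∫ y in Set.Ioc (0:ℝ) R, (1+y)⁻¹ = Real.log (1+R) := by
  rw [← intervalIntegral.integral_of_le hR]
  have hderiv : ∀ y ∈ Set.uIcc (0:ℝ) R, HasDerivAt (fun x => Real.log (1+x)) (1+y)⁻¹ y := by
    intro y hy
    rw [Set.uIcc_of_le hR] at hy
    have h1 : (0:ℝ) < 1 + y := by nlinarith [hy.1]
    have := (Real.hasDerivAt_log h1.ne').comp y ((hasDerivAt_id y).const_add 1)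
    simpa [Function.comp_def] using this
  rw [intervalIntegral.integral_eq_sub_of_hasDerivAt hderiv ?_]
  · simp
  · apply ContinuousOn.intervalIntegrable
    apply ContinuousOn.inv₀ (by fun_prop)
    intro y hy
    rw [Set.uIcc_of_le hR] at hy
    nlinarith [hy.1]

/-- 1-D radial integral bound. -/
lemma wbound {R a b : ℝ} (hR : 0 < R) (ha : 0 ≤ a) (hb : 0 ≤ b) :
    ∫ y in Set.Ioc (0:ℝ) R, y * (a/(1+y) + b/(1+y)^2) ≤ a*R + b*Real.log (1+R) := by
  have hmono : ∀ y ∈ Set.Ioc (0:ℝ) R, y * (a/(1+y) + b/(1+y)^2) ≤ a + b * (1+y)⁻¹ := by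
    intro y hy
    have hy0 : 0 < y := hy.1
    have h1 : (0:ℝ) < 1 + y := by linarith
    have e1 : y * (a/(1+y)) ≤ a := by
      rw [mul_div_assoc']
      rw [div_le_iff₀ h1]
      nlinarith
    have e2 : y * (b/(1+y)^2) ≤ b * (1+y)⁻¹ := by
      rw [mul_div_assoc', div_le_iff₀ (by positivity), mul_assoc]
      have h2 : (1+y)⁻¹ * (1+y)^2 = 1+y := by field_simp
      rw [h2]
      nlinarith
    nlinarith [e1, e2]
  have hcont1 : ContinuousOn (fun y : ℝ => y * (a/(1+y) + b/(1+y)^2)) (Set.Icc 0 R) := by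
    apply ContinuousOn.mul (by fun_prop)
    apply ContinuousOn.add
    · apply ContinuousOn.div (by fun_prop) (by fun_prop)
      intro y hy; nlinarith [hy.1]
    · apply ContinuousOn.div (by fun_prop) (by fun_prop)
      intro y hy; nlinarith [hy.1]
  have hcont2 : ContinuousOn (fun y : ℝ => a + b * (1+y)⁻¹) (Set.Icc 0 R) := by
    apply ContinuousOn.add continuousOn_const
    apply ContinuousOn.mul continuousOn_const
    apply ContinuousOn.inv₀ (by fun_prop)
    intro y hy; nlinarith [hy.1]
  have hint1 : IntegrableOn (fun y : ℝ => y * (a/(1+y) + b/(1+y)^2)) (Set.Ioc 0 R) := by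
    exact (hcont1.integrableOn_compact isCompact_Icc).mono_set Set.Ioc_subset_Icc_self
  have hint2 : IntegrableOn (fun y : ℝ => a + b * (1+y)⁻¹) (Set.Ioc 0 R) := by
    exact (hcont2.integrableOn_compact isCompact_Icc).mono_set Set.Ioc_subset_Icc_self
  calc ∫ y in Set.Ioc (0:ℝ) R, y * (a/(1+y) + b/(1+y)^2)
      ≤ ∫ y in Set.Ioc (0:ℝ) R, (a + b * (1+y)⁻¹) :=
        setIntegral_mono_on hint1 hint2 measurableSet_Ioc hmono
    _ = a * R + b * Real.log (1+R) := by
        have hI : IntegrableOn (fun y : ℝ => (1+y)⁻¹) (Set.Ioc 0 R) := by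
          have hc : ContinuousOn (fun y : ℝ => (1+y)⁻¹) (Set.Icc 0 R) := by
            apply ContinuousOn.inv₀ (by fun_prop)
            intro y hy; nlinarith [hy.1]
          exact (hc.integrableOn_compact isCompact_Icc).mono_set Set.Ioc_subset_Icc_self
        rw [integral_add (show IntegrableOn (fun _ : ℝ => a) (Set.Ioc 0 R) volume from integrableOn_const measure_Ioc_lt_top.ne) (show IntegrableOn (fun y : ℝ => b * (1+y)⁻¹) (Set.Ioc 0 R) volume from hI.const_mul b),
          integral_const, MeasureTheory.integral_const_mul, integral_inv_one_add hR.le]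
        simp [Real.volume_Ioc, hR.le, smul_eq_mul]
        ring
  

lemma ptwise_a {τ σ V ρ : ℝ} (hτ : 1 ≤ τ) (hσ : 1 ≤ σ) (hV : 1 ≤ V) (hρ : 0 ≤ ρ) :
    (1/(τ+σ)) * (1 + (τ+σ)/(1+ρ) + τ*σ/(1+ρ)^2) * (1/(1+ρ+σ*V)^2)
      ≤ (1/(1+σ)) * ((1/(1+τ))/(1+ρ) + 1/(1+ρ)^2) := by
  have hρ1 : (0:ℝ) < 1 + ρ := by linarith
  have hσ1 : (0:ℝ) < 1 + σ := by linarith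
  have hτ1 : (0:ℝ) < 1 + τ := by linarith
  have hτσ : (0:ℝ) < τ + σ := by linarith
  have hsv : σ ≤ σ * V := le_mul_of_one_le_right (by linarith) hV
  have hD : (0:ℝ) < 1 + ρ + σ * V := by nlinarith
  have eL : (1/(τ+σ)) * (1 + (τ+σ)/(1+ρ) + τ*σ/(1+ρ)^2) * (1/(1+ρ+σ*V)^2)
      = ((1+ρ+τ)*(1+ρ+σ))/((τ+σ)*((1+ρ)^2*(1+ρ+σ*V)^2)) := by
    field_simp
    ring
  have eR : (1/(1+σ)) * ((1/(1+τ))/(1+ρ) + 1/(1+ρ)^2)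
      = (2+ρ+τ)/((1+σ)*((1+τ)*(1+ρ)^2)) := by
    field_simp
    ring
  rw [eL, eR, div_le_div_iff₀ (by positivity) (by positivity)]
  have h1 : (1+ρ+τ) ≤ (2+ρ+τ) := by linarith
  have h2 : (1+τ) ≤ (τ+σ) := by linarith
  have h3 : (1+ρ+σ) ≤ 1+ρ+σ*V := by linarith
  have h4 : (1+σ) ≤ 1+ρ+σ*V := by linarith
  have A : (1+ρ+τ)*(1+τ) ≤ (2+ρ+τ)*(τ+σ) :=
    mul_le_mul h1 h2 (by linarith) (by linarith)
  have B : (1+ρ+σ)*(1+σ) ≤ (1+ρ+σ*V)*(1+ρ+σ*V) :=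
    mul_le_mul h3 h4 (by linarith) (by linarith)
  have key : ((1+ρ+τ)*(1+τ))*((1+ρ+σ)*(1+σ))*(1+ρ)^2
      ≤ ((2+ρ+τ)*(τ+σ))*((1+ρ+σ*V)*(1+ρ+σ*V))*(1+ρ)^2 := by
    apply mul_le_mul_of_nonneg_right _ (by positivity)
    exact mul_le_mul A B (by nlinarith) (by nlinarith)
  calc (1+ρ+τ)*(1+ρ+σ)*((1+σ)*((1+τ)*(1+ρ)^2))
      = ((1+ρ+τ)*(1+τ))*((1+ρ+σ)*(1+σ))*(1+ρ)^2 := by ring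
    _ ≤ ((2+ρ+τ)*(τ+σ))*((1+ρ+σ*V)*(1+ρ+σ*V))*(1+ρ)^2 := key
    _ = (2+ρ+τ)*((τ+σ)*((1+ρ)^2*(1+ρ+σ*V)^2)) := by ring

lemma ptwise_b {τ σ V ρ : ℝ} (hτ : 1 ≤ τ) (hσ : 1 ≤ σ) (hV : 1 ≤ V) (hρ : 0 ≤ ρ) :
    (1/(τ+σ)) * (1 + (τ+σ)/(1+ρ) + τ*σ/(1+ρ)^2) * (1/(1+ρ+σ*V)^2)
      ≤ (1/(1+σ)^2) * (1/(1+ρ) + τ/(1+ρ)^2) := by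
  have hρ1 : (0:ℝ) < 1 + ρ := by linarith
  have hσ1 : (0:ℝ) < 1 + σ := by linarith
  have hτ1 : (0:ℝ) < 1 + τ := by linarith
  have hτσ : (0:ℝ) < τ + σ := by linarith
  have hsv : σ ≤ σ * V := le_mul_of_one_le_right (by linarith) hV
  have hD : (0:ℝ) < 1 + ρ + σ * V := by nlinarith
  have eL : (1/(τ+σ)) * (1 + (τ+σ)/(1+ρ) + τ*σ/(1+ρ)^2) * (1/(1+ρ+σ*V)^2)
      = ((1+ρ+τ)*(1+ρ+σ))/((τ+σ)*((1+ρ)^2*(1+ρ+σ*V)^2)) := by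
    field_simp
    ring
  have eR : (1/(1+σ)^2) * (1/(1+ρ) + τ/(1+ρ)^2)
      = (1+ρ+τ)/((1+σ)^2*(1+ρ)^2) := by
    field_simp
  rw [eL, eR, div_le_div_iff₀ (by positivity) (by positivity)]
  have h2 : (1+σ) ≤ (τ+σ) := by linarith
  have h3 : (1+ρ+σ) ≤ 1+ρ+σ*V := by linarith
  have h4 : (1+σ) ≤ 1+ρ+σ*V := by linarith
  have B : (1+ρ+σ)*(1+σ) ≤ (1+ρ+σ*V)*(1+ρ+σ*V) :=
    mul_le_mul h3 h4 (by linarith) (by linarith)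
  have key : (1+ρ+τ)*(((1+ρ+σ)*(1+σ))*(1+σ))*(1+ρ)^2
      ≤ (1+ρ+τ)*(((1+ρ+σ*V)*(1+ρ+σ*V))*(τ+σ))*(1+ρ)^2 := by
    apply mul_le_mul_of_nonneg_right _ (by positivity)
    apply mul_le_mul_of_nonneg_left _ (by linarith)
    exact mul_le_mul B h2 (by linarith) (by nlinarith)
  calc (1+ρ+τ)*(1+ρ+σ)*((1+σ)^2*(1+ρ)^2)
      = (1+ρ+τ)*(((1+ρ+σ)*(1+σ))*(1+σ))*(1+ρ)^2 := by ring
    _ ≤ (1+ρ+τ)*(((1+ρ+σ*V)*(1+ρ+σ*V))*(τ+σ))*(1+ρ)^2 := key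
    _ = (1+ρ+τ)*((τ+σ)*((1+ρ)^2*(1+ρ+σ*V)^2)) := by ring

lemma outer_integrable {τ : ℝ} (hτ : 1 ≤ τ) :
    IntegrableOn (fun σ : ℝ => (2+τ)/((1+σ)*(2+τ+σ))) (Set.Ioi 1) := by
  have hτ2 : (0:ℝ) < 2 + τ := by linarith
  have hg : IntegrableOn (fun σ : ℝ => (2+τ) * σ ^ (-2:ℝ)) (Set.Ioi 1) :=
    (integrableOn_Ioi_rpow_of_lt (by norm_num) one_pos).const_mul _
  apply MeasureTheory.Integrable.mono hg
  · apply ContinuousOn.aestronglyMeasurable _ measurableSet_Ioi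
    apply ContinuousOn.div continuousOn_const (by fun_prop)
    intro σ hσ
    have : (1:ℝ) < σ := hσ
    positivity
  · filter_upwards [ae_restrict_mem measurableSet_Ioi] with σ hσ
    have h1 : (1:ℝ) < σ := hσ
    have h0 : (0:ℝ) < σ := by linarith
    rw [Real.norm_of_nonneg (by positivity), Real.norm_of_nonneg (by positivity),
      Real.rpow_neg h0.le, show ((2:ℝ)) = ((2:ℕ):ℝ) by norm_num, Real.rpow_natCast,
      ← div_eq_mul_inv]
    apply div_le_div_of_nonneg_left (by positivity) (by positivity)
    nlinarith

lemma outer_integral {τ : ℝ} (hτ : 1 ≤ τ) :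
    ∫ σ in Set.Ioi (1:ℝ), (2+τ)/((1+σ)*(2+τ+σ)) ≤ 2*(1 + Real.log (2+τ)) := by
  have hτ2 : (0:ℝ) < 2 + τ := by linarith
  have hInt := outer_integrable hτ
  have hEq : ∫ σ in Set.Ioi (1:ℝ), (2+τ)/((1+σ)*(2+τ+σ))
      = ((2+τ)/(1+τ)) * (Real.log (3+τ) - Real.log 2) := by
    have hderiv : ∀ σ ∈ Set.Ici (1:ℝ),
        HasDerivAt (fun σ => ((2+τ)/(1+τ)) * (Real.log (1+σ) - Real.log (2+τ+σ)))
          ((2+τ)/((1+σ)*(2+τ+σ))) σ := by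
      intro σ hσ
      have hσ1 : (1:ℝ) ≤ σ := hσ
      have hp1 : (0:ℝ) < 1 + σ := by linarith
      have hp2 : (0:ℝ) < 2 + τ + σ := by linarith
      have d1 : HasDerivAt (fun σ : ℝ => Real.log (1+σ)) (1+σ)⁻¹ σ := by
        have := (Real.hasDerivAt_log hp1.ne').comp σ ((hasDerivAt_id σ).const_add 1)
        simpa [Function.comp_def] using this
      have d2 : HasDerivAt (fun σ : ℝ => Real.log (2+τ+σ)) (2+τ+σ)⁻¹ σ := by
        have := (Real.hasDerivAt_log hp2.ne').comp σ ((hasDerivAt_id σ).const_add (2+τ))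
        simpa [Function.comp_def] using this
      have := (d1.sub d2).const_mul ((2+τ)/(1+τ))
      refine this.congr_deriv ?_
      have hτ1 : (1:ℝ) + τ ≠ 0 := ne_of_gt (by linarith)
      field_simp
      ring
    have htend : Tendsto (fun σ : ℝ => ((2+τ)/(1+τ)) * (Real.log (1+σ) - Real.log (2+τ+σ)))
        atTop (nhds 0) := by
      have hr : Tendsto (fun σ : ℝ => (1+σ)/(2+τ+σ)) atTop (nhds 1) := by
        have h0 : Tendsto (fun σ : ℝ => (1+τ)/(2+τ+σ)) atTop (nhds 0) :=
          Tendsto.div_atTop tendsto_const_nhds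
            (tendsto_atTop_add_const_left atTop (2+τ) tendsto_id)
        have h1 : Tendsto (fun σ : ℝ => 1 - (1+τ)/(2+τ+σ)) atTop (nhds (1 - 0)) :=
          tendsto_const_nhds.sub h0
        rw [sub_zero] at h1
        apply h1.congr'
        filter_upwards [eventually_ge_atTop (1:ℝ)] with σ hσ
        have hp2 : (0:ℝ) < 2 + τ + σ := by linarith
        field_simp
        ring
      have hl : Tendsto (fun σ : ℝ => Real.log (1+σ) - Real.log (2+τ+σ)) atTop (nhds 0) := by
        have := ((Real.continuousAt_log one_ne_zero).tendsto.comp hr)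
        rw [Real.log_one] at this
        apply this.congr'
        filter_upwards [eventually_ge_atTop (1:ℝ)] with σ hσ
        have hp1 : (0:ℝ) < 1 + σ := by linarith
        have hp2 : (0:ℝ) < 2 + τ + σ := by linarith
        simp only [Function.comp_apply]
        rw [Real.log_div hp1.ne' hp2.ne']
      have := hl.const_mul ((2+τ)/(1+τ))
      simpa using this
    have := integral_Ioi_of_hasDerivAt_of_tendsto' hderiv hInt htend
    rw [this]
    have : (2:ℝ) + τ + 1 = 3 + τ := by ring
    rw [show (1:ℝ)+1 = 2 by norm_num, this]
    ring
  rw [hEq]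
  have hlog1 : Real.log (3+τ) - Real.log 2 ≤ Real.log (2+τ) := by
    have h1 : Real.log (3+τ) ≤ Real.log (2*(2+τ)) := by
      apply Real.log_le_log (by linarith)
      linarith
    rw [Real.log_mul (by norm_num) (by linarith)] at h1
    linarith
  have hlog0 : 0 ≤ Real.log (3+τ) - Real.log 2 := by
    have := Real.log_le_log (by norm_num : (0:ℝ) < 2) (by linarith : (2:ℝ) ≤ 3+τ)
    linarith
  have hc : (2+τ)/(1+τ) ≤ 2 := by
    rw [div_le_iff₀ (by linarith)]
    linarith
  have hlogpos : 0 ≤ Real.log (2+τ) := Real.log_nonneg (by linarith)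
  calc ((2+τ)/(1+τ)) * (Real.log (3+τ) - Real.log 2)
      ≤ 2 * Real.log (2+τ) := mul_le_mul hc hlog1 hlog0 (by norm_num)
    _ ≤ 2*(1 + Real.log (2+τ)) := by linarith

set_option maxHeartbeats 1000000 in
/-- Core pre-collision computation on `G_{3,1}`. -/
theorem stmt5 (C : ℝ) (hC : 0 < C) :
    ∃ C' > 0, ∀ τ V : ℝ, 1 ≤ τ → 1 ≤ V →
      (∫ σ in Set.Ioi (1 : ℝ),
          ∫ w in {w : EuclideanSpace ℝ (Fin 2) | ‖w‖ ≤ C * (1 + τ)},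
            (1 / (τ + σ)) * (1 + (τ + σ) / (1 + ‖w‖) + τ * σ / (1 + ‖w‖) ^ 2)
              * (1 / (1 + ‖w‖ + σ * V) ^ 2))
        ≤ C' * (1 + Real.log (2 + τ)) ^ 2 := by
  have hc₁0 : (0:ℝ) ≤ 1 + Real.log (1+C) := by
    have := Real.log_nonneg (by linarith : (1:ℝ) ≤ 1+C)
    linarith
  set c₁ : ℝ := 1 + Real.log (1+C) with hc₁def
  set α : ℝ := 2 * Bc * (C + c₁) with hαdef
  have hα0 : 0 ≤ α := by
    apply mul_nonneg (by linarith [Bc_nonneg])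
    linarith
  refine ⟨4*α + 1, by linarith, ?_⟩
  intro τ V hτ hV
  have hτ2 : (0:ℝ) < 2 + τ := by linarith
  have hR : (0:ℝ) < C * (1+τ) := by
    apply mul_pos hC
    linarith
  set L : ℝ := 1 + Real.log (2 + τ) with hLdef
  have hL1 : (1:ℝ) ≤ L := by
    have := Real.log_nonneg (by linarith : (1:ℝ) ≤ 2+τ)
    simp only [hLdef]
    linarith
  have hlogR0 : 0 ≤ Real.log (1 + C*(1+τ)) := Real.log_nonneg (by linarith)
  have hlogR : Real.log (1 + C*(1+τ)) ≤ c₁ * L := by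
    have h1 : Real.log (1 + C*(1+τ)) ≤ Real.log ((1+C)*(2+τ)) := by
      apply Real.log_le_log (by linarith)
      have e1 : C*(1+τ) = C + C*τ := by ring
      have e2 : (1+C)*(2+τ) = 2+τ+2*C+C*τ := by ring
      linarith
    rw [Real.log_mul (by linarith) (by linarith)] at h1
    have h2 : Real.log (2+τ) ≤ L := by simp only [hLdef]; linarith
    have h3 : Real.log (1+C) ≤ Real.log (1+C) * L :=
      le_mul_of_one_le_right (Real.log_nonneg (by linarith)) hL1
    have h4 : c₁ * L = L + Real.log (1+C) * L := by rw [hc₁def]; ring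
    linarith
  set Sset := {w : EuclideanSpace ℝ (Fin 2) | ‖w‖ ≤ C * (1 + τ)} with hSdef
  have hSeq : Sset = Metric.closedBall (0 : EuclideanSpace ℝ (Fin 2)) (C*(1+τ)) := by
    ext w
    simp [hSdef, Metric.mem_closedBall, dist_zero_right]
  have hSm : MeasurableSet Sset := by rw [hSeq]; exact measurableSet_closedBall
  -- inner integral bounds
  have hcontn : Continuous fun w : EuclideanSpace ℝ (Fin 2) => 1 + ‖w‖ := by fun_prop
  have inner_bd : ∀ σ : ℝ, σ ∈ Set.Ioi (1:ℝ) →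
      (∫ w in Sset,
          (1 / (τ + σ)) * (1 + (τ + σ) / (1 + ‖w‖) + τ * σ / (1 + ‖w‖) ^ 2)
            * (1 / (1 + ‖w‖ + σ * V) ^ 2))
        ≤ (2*α*L) * ((2+τ)/((1+σ)*(2+τ+σ))) := by
    intro σ hσ
    have hσ1 : (1:ℝ) < σ := hσ
    have hσ0 : (0:ℝ) < 1 + σ := by linarith
    have hτσ : (0:ℝ) < τ + σ := by linarith
    have hσV : (0:ℝ) < σ * V := by nlinarith
    -- continuity and integrability of the integrand
    have hc1 : Continuous fun w : EuclideanSpace ℝ (Fin 2) => (τ+σ)/(1+‖w‖) :=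
      Continuous.div continuous_const hcontn (fun w => by positivity)
    have hc2 : Continuous fun w : EuclideanSpace ℝ (Fin 2) => τ*σ/(1+‖w‖)^2 :=
      Continuous.div continuous_const (hcontn.pow 2) (fun w => by positivity)
    have hc3 : Continuous fun w : EuclideanSpace ℝ (Fin 2) => 1/(1+‖w‖+σ*V)^2 := by
      apply Continuous.div continuous_const ((hcontn.add continuous_const).pow 2)
      intro w
      have h0 : (0:ℝ) < 1+‖w‖+σ*V := by nlinarith [norm_nonneg w]
      exact pow_ne_zero _ h0.ne'
    have hcont : Continuous fun w : EuclideanSpace ℝ (Fin 2) =>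
        (1 / (τ + σ)) * (1 + (τ + σ) / (1 + ‖w‖) + τ * σ / (1 + ‖w‖) ^ 2)
          * (1 / (1 + ‖w‖ + σ * V) ^ 2) :=
      (continuous_const.mul ((continuous_const.add hc1).add hc2)).mul hc3
    have hFi : IntegrableOn (fun w : EuclideanSpace ℝ (Fin 2) =>
        (1 / (τ + σ)) * (1 + (τ + σ) / (1 + ‖w‖) + τ * σ / (1 + ‖w‖) ^ 2)
          * (1 / (1 + ‖w‖ + σ * V) ^ 2)) Sset := by
      rw [hSeq]
      exact hcont.continuousOn.integrableOn_compact (isCompact_closedBall _ _)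
    -- branch a
    have hGa : Continuous fun w : EuclideanSpace ℝ (Fin 2) =>
        (1/(1+σ)) * ((1/(1+τ))/(1+‖w‖) + 1/(1+‖w‖)^2) := by
      apply continuous_const.mul
      apply Continuous.add
      · exact Continuous.div continuous_const hcontn (fun w => by positivity)
      · exact Continuous.div continuous_const (hcontn.pow 2) (fun w => by positivity)
    have hGai : IntegrableOn (fun w : EuclideanSpace ℝ (Fin 2) =>
        (1/(1+σ)) * ((1/(1+τ))/(1+‖w‖) + 1/(1+‖w‖)^2)) Sset := by
      rw [hSeq]
      exact hGa.continuousOn.integrableOn_compact (isCompact_closedBall _ _)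
    have hIa : (∫ w in Sset,
          (1 / (τ + σ)) * (1 + (τ + σ) / (1 + ‖w‖) + τ * σ / (1 + ‖w‖) ^ 2)
            * (1 / (1 + ‖w‖ + σ * V) ^ 2))
        ≤ (1/(1+σ)) * (2*Bc*(C + Real.log (1+C*(1+τ)))) := by
      calc (∫ w in Sset,
            (1 / (τ + σ)) * (1 + (τ + σ) / (1 + ‖w‖) + τ * σ / (1 + ‖w‖) ^ 2)
              * (1 / (1 + ‖w‖ + σ * V) ^ 2))
          ≤ ∫ w in Sset, (1/(1+σ)) * ((1/(1+τ))/(1+‖w‖) + 1/(1+‖w‖)^2) := by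
            apply setIntegral_mono_on hFi hGai hSm
            intro w _
            exact ptwise_a hτ hσ1.le hV (norm_nonneg w)
        _ = (1/(1+σ)) * ∫ w in Sset, ((1/(1+τ))/(1+‖w‖) + 1/(1+‖w‖)^2) :=
            MeasureTheory.integral_const_mul _ _
        _ = (1/(1+σ)) * (2 * Bc * ∫ y in Set.Ioc (0:ℝ) (C*(1+τ)),
              y * ((1/(1+τ))/(1+y) + 1/(1+y)^2)) := by
            rw [hSdef]
            exact congrArg _ (polar_ball (C*(1+τ)) (fun y => (1/(1+τ))/(1+y) + 1/(1+y)^2))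
        _ ≤ (1/(1+σ)) * (2 * Bc * ((1/(1+τ))*(C*(1+τ)) + 1*Real.log (1+C*(1+τ)))) := by
            apply mul_le_mul_of_nonneg_left _ (by positivity)
            apply mul_le_mul_of_nonneg_left _ (by linarith [Bc_nonneg])
            have hb := wbound (a := 1/(1+τ)) (b := 1) hR (by positivity) (by norm_num)
            calc (∫ y in Set.Ioc (0:ℝ) (C*(1+τ)), y * ((1/(1+τ))/(1+y) + 1/(1+y)^2))
                = ∫ y in Set.Ioc (0:ℝ) (C*(1+τ)),
                    y * ((1/(1+τ))/(1+y) + 1/(1+y)^2) := rfl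
              _ ≤ (1/(1+τ))*(C*(1+τ)) + 1*Real.log (1+C*(1+τ)) := hb
        _ = (1/(1+σ)) * (2*Bc*(C + Real.log (1+C*(1+τ)))) := by
            have : (1/(1+τ))*(C*(1+τ)) = C := by
              field_simp
            rw [this]
            ring
    -- branch b
    have hGb : Continuous fun w : EuclideanSpace ℝ (Fin 2) =>
        (1/(1+σ)^2) * (1/(1+‖w‖) + τ/(1+‖w‖)^2) := by
      apply continuous_const.mul
      apply Continuous.add
      · exact Continuous.div continuous_const hcontn (fun w => by positivity)
      · exact Continuous.div continuous_const (hcontn.pow 2) (fun w => by positivity)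
    have hGbi : IntegrableOn (fun w : EuclideanSpace ℝ (Fin 2) =>
        (1/(1+σ)^2) * (1/(1+‖w‖) + τ/(1+‖w‖)^2)) Sset := by
      rw [hSeq]
      exact hGb.continuousOn.integrableOn_compact (isCompact_closedBall _ _)
    have hIb : (∫ w in Sset,
          (1 / (τ + σ)) * (1 + (τ + σ) / (1 + ‖w‖) + τ * σ / (1 + ‖w‖) ^ 2)
            * (1 / (1 + ‖w‖ + σ * V) ^ 2))
        ≤ (1/(1+σ)^2) * (2*Bc*(C*(1+τ) + τ*Real.log (1+C*(1+τ)))) := by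
      calc (∫ w in Sset,
            (1 / (τ + σ)) * (1 + (τ + σ) / (1 + ‖w‖) + τ * σ / (1 + ‖w‖) ^ 2)
              * (1 / (1 + ‖w‖ + σ * V) ^ 2))
          ≤ ∫ w in Sset, (1/(1+σ)^2) * (1/(1+‖w‖) + τ/(1+‖w‖)^2) := by
            apply setIntegral_mono_on hFi hGbi hSm
            intro w _
            exact ptwise_b hτ hσ1.le hV (norm_nonneg w)
        _ = (1/(1+σ)^2) * ∫ w in Sset, (1/(1+‖w‖) + τ/(1+‖w‖)^2) :=
            MeasureTheory.integral_const_mul _ _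
        _ = (1/(1+σ)^2) * (2 * Bc * ∫ y in Set.Ioc (0:ℝ) (C*(1+τ)),
              y * (1/(1+y) + τ/(1+y)^2)) := by
            rw [hSdef]
            exact congrArg _ (polar_ball (C*(1+τ)) (fun y => 1/(1+y) + τ/(1+y)^2))
        _ ≤ (1/(1+σ)^2) * (2 * Bc * (1*(C*(1+τ)) + τ*Real.log (1+C*(1+τ)))) := by
            apply mul_le_mul_of_nonneg_left _ (by positivity)
            apply mul_le_mul_of_nonneg_left _ (by linarith [Bc_nonneg])
            exact wbound (a := 1) (b := τ) hR (by norm_num) (by linarith)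
        _ = (1/(1+σ)^2) * (2*Bc*(C*(1+τ) + τ*Real.log (1+C*(1+τ)))) := by ring
    -- combine
    rcases le_or_gt (1+σ) (2+τ) with hcase | hcase
    · -- use branch a
      have hJa : 2*Bc*(C + Real.log (1+C*(1+τ))) ≤ α*L := by
        have hCL : C ≤ C * L := le_mul_of_one_le_right hC.le hL1
        have hex : (C + c₁)*L = C*L + c₁*L := by ring
        have : C + Real.log (1+C*(1+τ)) ≤ (C + c₁)*L := by linarith
        calc 2*Bc*(C + Real.log (1+C*(1+τ))) ≤ 2*Bc*((C + c₁)*L) := by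
              apply mul_le_mul_of_nonneg_left this (by linarith [Bc_nonneg])
          _ = α*L := by rw [hαdef]; ring
      have hJa0 : 0 ≤ 2*Bc*(C + Real.log (1+C*(1+τ))) := by
        apply mul_nonneg (by linarith [Bc_nonneg])
        linarith
      refine le_trans hIa ?_
      have hαL0 : 0 ≤ α*L := mul_nonneg hα0 (by linarith)
      have key : (2*Bc*(C + Real.log (1+C*(1+τ)))) * (2+τ+σ) ≤ (α*L) * (2*(2+τ)) :=
        mul_le_mul hJa (by linarith) (by linarith) hαL0
      have e1 : (1/(1+σ)) * (2*Bc*(C + Real.log (1+C*(1+τ))))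
          = ((2*Bc*(C + Real.log (1+C*(1+τ)))) * (2+τ+σ)) / ((1+σ)*(2+τ+σ)) := by
        rw [div_mul_eq_mul_div, one_mul, mul_div_mul_right _ _ (by linarith : (2+τ+σ:ℝ) ≠ 0)]
      have e2 : (2*α*L) * ((2+τ)/((1+σ)*(2+τ+σ)))
          = ((α*L) * (2*(2+τ))) / ((1+σ)*(2+τ+σ)) := by
        rw [mul_div_assoc']
        ring_nf
      rw [e1, e2]
      exact (div_le_div_iff_of_pos_right (by positivity)).mpr key
    · -- use branch b
      have hJb : 2*Bc*(C*(1+τ) + τ*Real.log (1+C*(1+τ))) ≤ α*((2+τ)*L) := by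
        have hcL0 : 0 ≤ c₁*L := mul_nonneg hc₁0 (by linarith)
        have h1 : τ*Real.log (1+C*(1+τ)) ≤ (2+τ)*(c₁*L) := by
          have ha := mul_le_mul_of_nonneg_left hlogR (by linarith : (0:ℝ) ≤ τ)
          have hb := mul_le_mul_of_nonneg_right (by linarith : τ ≤ 2+τ) hcL0
          linarith
        have h2 : C*(1+τ) ≤ C*((2+τ)*L) := by
          apply mul_le_mul_of_nonneg_left _ hC.le
          have := mul_le_mul_of_nonneg_left hL1 (by linarith : (0:ℝ) ≤ 2+τ)
          linarith
        have hex : (C + c₁)*((2+τ)*L) = C*((2+τ)*L) + (2+τ)*(c₁*L) := by ring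
        have : C*(1+τ) + τ*Real.log (1+C*(1+τ)) ≤ (C + c₁)*((2+τ)*L) := by linarith
        calc 2*Bc*(C*(1+τ) + τ*Real.log (1+C*(1+τ))) ≤ 2*Bc*((C + c₁)*((2+τ)*L)) := by
              apply mul_le_mul_of_nonneg_left this (by linarith [Bc_nonneg])
          _ = α*((2+τ)*L) := by rw [hαdef]; ring
      have hJb0 : 0 ≤ 2*Bc*(C*(1+τ) + τ*Real.log (1+C*(1+τ))) := by
        apply mul_nonneg (by linarith [Bc_nonneg])
        have := mul_nonneg hC.le (by linarith : (0:ℝ) ≤ 1+τ)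
        have := mul_nonneg (by linarith : (0:ℝ) ≤ τ) hlogR0
        linarith
      refine le_trans hIb ?_
      have hαL0 : 0 ≤ α*((2+τ)*L) := mul_nonneg hα0 (mul_nonneg (by linarith) (by linarith))
      have key : (2*Bc*(C*(1+τ) + τ*Real.log (1+C*(1+τ)))) * (2+τ+σ)
          ≤ (α*((2+τ)*L)) * (2*(1+σ)) :=
        mul_le_mul hJb (by linarith) (by linarith) hαL0
      have hD0 : (0:ℝ) < (1+σ)^2*(2+τ+σ) := by positivity
      have e1 : (1/(1+σ)^2) * (2*Bc*(C*(1+τ) + τ*Real.log (1+C*(1+τ))))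
          = ((2*Bc*(C*(1+τ) + τ*Real.log (1+C*(1+τ)))) * (2+τ+σ)) / ((1+σ)^2*(2+τ+σ)) := by
        rw [div_mul_eq_mul_div, one_mul, mul_div_mul_right _ _ (by linarith : (2+τ+σ:ℝ) ≠ 0)]
      have e2 : (2*α*L) * ((2+τ)/((1+σ)*(2+τ+σ)))
          = ((α*((2+τ)*L)) * (2*(1+σ))) / ((1+σ)^2*(2+τ+σ)) := by
        field_simp
      rw [e1, e2]
      exact (div_le_div_iff_of_pos_right hD0).mpr key
  -- outer integral
  have houter : (∫ σ in Set.Ioi (1 : ℝ),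
        ∫ w in Sset,
          (1 / (τ + σ)) * (1 + (τ + σ) / (1 + ‖w‖) + τ * σ / (1 + ‖w‖) ^ 2)
            * (1 / (1 + ‖w‖ + σ * V) ^ 2))
      ≤ ∫ σ in Set.Ioi (1:ℝ), (2*α*L) * ((2+τ)/((1+σ)*(2+τ+σ))) := by
    apply integral_mono_of_nonneg
    · filter_upwards [ae_restrict_mem measurableSet_Ioi] with σ hσ
      have hσ1 : (1:ℝ) < σ := hσ
      apply setIntegral_nonneg hSm
      intro w _
      have h1 : (0:ℝ) ≤ 1/(τ+σ) := by
        apply div_nonneg (by norm_num)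
        linarith
      have h2 : (0:ℝ) ≤ (τ+σ)/(1+‖w‖) := by
        apply div_nonneg (by linarith)
        positivity
      have h3 : (0:ℝ) ≤ τ*σ/(1+‖w‖)^2 := by
        apply div_nonneg (by nlinarith)
        positivity
      have h4 : (0:ℝ) ≤ 1/(1+‖w‖+σ*V)^2 := by positivity
      apply mul_nonneg (mul_nonneg h1 (by linarith)) h4
    · exact ((outer_integrable hτ).const_mul _)
    · filter_upwards [ae_restrict_mem measurableSet_Ioi] with σ hσ
      exact inner_bd σ hσ
  have houter2 : (∫ σ in Set.Ioi (1:ℝ), (2*α*L) * ((2+τ)/((1+σ)*(2+τ+σ))))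
      ≤ (2*α*L) * (2*L) := by
    rw [MeasureTheory.integral_const_mul]
    apply mul_le_mul_of_nonneg_left _ (mul_nonneg (mul_nonneg (by norm_num) hα0) (by linarith))
    have h := outer_integral hτ
    simpa [hLdef] using h
  calc (∫ σ in Set.Ioi (1 : ℝ),
        ∫ w in Sset,
          (1 / (τ + σ)) * (1 + (τ + σ) / (1 + ‖w‖) + τ * σ / (1 + ‖w‖) ^ 2)
            * (1 / (1 + ‖w‖ + σ * V) ^ 2))
      ≤ (2*α*L) * (2*L) := le_trans houter houter2
    _ ≤ (4*α + 1) * L^2 := by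
        have h1 : (2*α*L)*(2*L) = 4*(α*L^2) := by ring
        have h2 : (4*α + 1) * L^2 = 4*(α*L^2) + L^2 := by ring
        have := sq_nonneg L
        linarith
end

section
/- There is an absolute constant C such that for every T ≥ 1, ∫_{ℝ²} (1+|w|)^{-2} e^{-|w-x⊥|/T} dw ≤ C(1 + log(2+T)) uniformly in x⊥ ∈ ℝ². -/
open MeasureTheory Set Metric

private lemma aux_exp_bound {T r : ℝ} (hT : 1 ≤ T) (hr : 0 ≤ r) :
    Real.exp (-r / T) ≤ 27 * T ^ 3 * ((1 + r) ^ 3)⁻¹ := by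
  have hT0 : (0 : ℝ) < T := lt_of_lt_of_le one_pos hT
  have hA : (0 : ℝ) < Real.exp (r / T) := Real.exp_pos _
  have hP : (0 : ℝ) < (1 + r) ^ 3 := by positivity
  have h1 : 1 + r / (3 * T) ≤ Real.exp (r / (3 * T)) := by
    have := Real.add_one_le_exp (r / (3 * T)); linarith
  have h2 : 1 + r ≤ 3 * T * Real.exp (r / (3 * T)) := by
    have h3 : 3 * T * (1 + r / (3 * T)) = 3 * T + r := by field_simp
    nlinarith [Real.exp_pos (r / (3 * T))]
  have he : Real.exp (r / (3 * T)) ^ (3 : ℕ) = Real.exp (r / T) := by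
    rw [← Real.exp_nat_mul]
    congr 1
    field_simp
    ring
  have h4 : (1 + r) ^ 3 ≤ 27 * T ^ 3 * Real.exp (r / T) := by
    have h5 := pow_le_pow_left₀ (by positivity) h2 3
    rw [mul_pow, mul_pow, he] at h5
    nlinarith
  have key : (1 : ℝ) / Real.exp (r / T) ≤ (27 * T ^ 3) / (1 + r) ^ 3 := by
    rw [div_le_div_iff₀ hA hP]
    nlinarith
  have : Real.exp (-r / T) = (Real.exp (r / T))⁻¹ := by
    rw [neg_div, Real.exp_neg]
  rw [this]
  calc (Real.exp (r / T))⁻¹ = 1 / Real.exp (r / T) := (one_div _).symm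
    _ ≤ (27 * T ^ 3) / (1 + r) ^ 3 := key
    _ = 27 * T ^ 3 * ((1 + r) ^ 3)⁻¹ := by rw [div_eq_mul_inv]

private lemma aux_log_int {R : ℝ} (hR : 0 ≤ R) :
    (∫ y in Ioi (0 : ℝ), y * (if y ≤ R then ((1 + y) ^ 2)⁻¹ else 0))
      ≤ Real.log (1 + R) := by
  have hIoc : Ioc (0 : ℝ) R ⊆ Ioi 0 := Ioc_subset_Ioi_self
  have hφ : IntegrableOn (fun y : ℝ => y * ((1 + y) ^ 2)⁻¹) (Ioc 0 R) := by
    have hc : ContinuousOn (fun y : ℝ => y * ((1 + y) ^ 2)⁻¹) (Icc 0 R) := by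
      refine continuousOn_id.mul (((continuousOn_const.add continuousOn_id).pow 2).inv₀ ?_)
      intro y hy
      have h0 : (0 : ℝ) ≤ y := hy.1
      exact (pow_pos (show (0 : ℝ) < 1 + y by linarith) 2).ne'
    exact (hc.integrableOn_compact isCompact_Icc).mono_set Ioc_subset_Icc_self
  have hψ : IntegrableOn (fun y : ℝ => (1 + y)⁻¹) (Ioc 0 R) := by
    have hc : ContinuousOn (fun y : ℝ => (1 + y)⁻¹) (Icc 0 R) := by
      refine (continuousOn_const.add continuousOn_id).inv₀ ?_
      intro y hy
      have h0 : (0 : ℝ) ≤ y := hy.1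
      exact (show (0 : ℝ) < 1 + y by linarith).ne'
    exact (hc.integrableOn_compact isCompact_Icc).mono_set Ioc_subset_Icc_self
  have h1 : (∫ y in Ioi (0 : ℝ), y * (if y ≤ R then ((1 + y) ^ 2)⁻¹ else 0))
      = ∫ y in Ioc (0 : ℝ) R, y * ((1 + y) ^ 2)⁻¹ := by
    rw [setIntegral_congr_fun measurableSet_Ioi
      (g := Set.indicator (Ioc (0 : ℝ) R) (fun y => y * ((1 + y) ^ 2)⁻¹)) ?_]
    · rw [setIntegral_indicator measurableSet_Ioc,
        Set.inter_eq_self_of_subset_right hIoc]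
    · intro y hy
      have hy0 : (0 : ℝ) < y := hy
      by_cases h : y ≤ R
      · simp [Set.indicator_apply, Set.mem_Ioc, hy0, h]
      · simp [Set.indicator_apply, Set.mem_Ioc, hy0, h]
  have h2 : (∫ y in Ioc (0 : ℝ) R, y * ((1 + y) ^ 2)⁻¹)
      ≤ ∫ y in Ioc (0 : ℝ) R, (1 + y)⁻¹ := by
    refine setIntegral_mono_on hφ hψ measurableSet_Ioc ?_
    intro y hy
    have hy0 : (0 : ℝ) < y := hy.1
    rw [← div_eq_mul_inv, div_le_iff₀ (by positivity)]
    have : (1 + y)⁻¹ * (1 + y) = 1 := inv_mul_cancel₀ (by positivity)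
    nlinarith
  have h3 : (∫ y in Ioc (0 : ℝ) R, (1 + y)⁻¹) = Real.log (1 + R) := by
    rw [← intervalIntegral.integral_of_le hR]
    have : (∫ y in (0 : ℝ)..R, (1 + y)⁻¹) = ∫ y in (1 : ℝ)..(1 + R), y⁻¹ := by
      simpa using intervalIntegral.integral_comp_add_left (fun y : ℝ => y⁻¹) 1
    rw [this, integral_inv ?_, div_one]
    intro h0
    rw [Set.uIcc_of_le (by linarith)] at h0
    exact absurd h0.1 (by norm_num)
  calc (∫ y in Ioi (0 : ℝ), y * (if y ≤ R then ((1 + y) ^ 2)⁻¹ else 0))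
      = ∫ y in Ioc (0 : ℝ) R, y * ((1 + y) ^ 2)⁻¹ := h1
    _ ≤ ∫ y in Ioc (0 : ℝ) R, (1 + y)⁻¹ := h2
    _ = Real.log (1 + R) := h3

private lemma aux_exp_int {T : ℝ} (hT : 1 ≤ T) :
    (∫ y in Ioi (0 : ℝ), y * Real.exp (-y / T)) = T ^ 2 := by
  have hT0 : (0 : ℝ) < T := lt_of_lt_of_le one_pos hT
  have h := Real.integral_rpow_mul_exp_neg_mul_Ioi (a := 2) (r := 1 / T)
    (by norm_num) (by positivity)
  have h1 : (∫ t in Ioi (0 : ℝ), t ^ ((2 : ℝ) - 1) * Real.exp (-(1 / T * t)))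
      = ∫ y in Ioi (0 : ℝ), y * Real.exp (-y / T) := by
    refine setIntegral_congr_fun measurableSet_Ioi (fun t ht => ?_)
    have ht0 : (0 : ℝ) < t := ht
    rw [show (2 : ℝ) - 1 = 1 by norm_num, Real.rpow_one]
    congr 1
    rw [neg_div, one_div, inv_mul_eq_div]
  rw [h1] at h
  rw [h, one_div_one_div, Real.Gamma_two, mul_one,
    show ((2 : ℝ) = ((2 : ℕ) : ℝ)) by norm_num, Real.rpow_natCast]

/-- Transverse estimate: `∫_{ℝ²} (1+|w|)⁻² e^{-|w-x⊥|/T} dw ≤ C(1+log(2+T))`, uniformly in `x⊥`. -/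
theorem stmt9 :
    ∃ C > 0, ∀ T : ℝ, 1 ≤ T → ∀ xp : EuclideanSpace ℝ (Fin 2),
      (∫ w : EuclideanSpace ℝ (Fin 2), (1 / (1 + ‖w‖) ^ 2) * Real.exp (-‖w - xp‖ / T))
        ≤ C * (1 + Real.log (2 + T)) := by
  classical
  set B : ℝ := (volume (Metric.ball (0 : EuclideanSpace ℝ (Fin 2)) 1)).toReal with hBdef
  have hB : 0 ≤ B := ENNReal.toReal_nonneg
  refine ⟨6 * B + 1, by positivity, ?_⟩
  intro T hT xp
  have hT0 : (0 : ℝ) < T := lt_of_lt_of_le one_pos hT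
  set R : ℝ := T ^ 2 with hRdef
  have hR0 : (0 : ℝ) ≤ R := by positivity
  set f₁ : ℝ → ℝ := fun y => if y ≤ R then ((1 + y) ^ 2)⁻¹ else 0 with hf₁
  set g₁ : EuclideanSpace ℝ (Fin 2) → ℝ := fun w => f₁ ‖w‖ with hg₁
  set g₂ : EuclideanSpace ℝ (Fin 2) → ℝ :=
    fun w => ((1 + R) ^ 2)⁻¹ * Real.exp (-‖w - xp‖ / T) with hg₂
  -- integrability of g₁
  have hg₁eq : g₁ = Set.indicator (Metric.closedBall (0 : EuclideanSpace ℝ (Fin 2)) R)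
      (fun w => ((1 + ‖w‖) ^ 2)⁻¹) := by
    funext w
    simp only [hg₁, hf₁, Set.indicator_apply, Metric.mem_closedBall, dist_zero_right]
  have hcont1 : Continuous fun w : EuclideanSpace ℝ (Fin 2) => ((1 + ‖w‖) ^ 2)⁻¹ := by
    refine ((continuous_const.add continuous_norm).pow 2).inv₀ fun w => (pow_pos (by positivity : (0 : ℝ) < 1 + ‖w‖) 2).ne'
  have hI₁ : Integrable g₁ := by
    rw [hg₁eq]
    exact (hcont1.continuousOn.integrableOn_compact (isCompact_closedBall _ _)).integrable_indicator
      measurableSet_closedBall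
  -- integrability of exp(-‖w‖/T) and g₂
  have ibase : Integrable fun w : EuclideanSpace ℝ (Fin 2) => Real.exp (-‖w‖ / T) := by
    have hmaj : Integrable fun w : EuclideanSpace ℝ (Fin 2) =>
        27 * T ^ 3 * (1 + ‖w‖) ^ (-(3 : ℝ)) := by
      refine (integrable_one_add_norm ?_).const_mul _
      rw [finrank_euclideanSpace_fin]; norm_num
    refine hmaj.mono' ?_ (ae_of_all _ fun w => ?_)
    · exact (Real.continuous_exp.comp ((continuous_norm.neg).div_const T)).aestronglyMeasurable
    · have h1 : (1 + ‖w‖ : ℝ) ^ (-(3 : ℝ)) = ((1 + ‖w‖) ^ 3)⁻¹ := by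
        rw [Real.rpow_neg (by positivity), show ((3 : ℝ) = ((3 : ℕ) : ℝ)) by norm_num,
          Real.rpow_natCast]
      rw [Real.norm_eq_abs, abs_of_pos (Real.exp_pos _), h1]
      exact aux_exp_bound hT (norm_nonneg w)
  have hI₂ : Integrable g₂ := (ibase.comp_sub_right xp).const_mul _
  -- pointwise bound
  have hle : ∀ w : EuclideanSpace ℝ (Fin 2),
      (1 / (1 + ‖w‖) ^ 2) * Real.exp (-‖w - xp‖ / T) ≤ g₁ w + g₂ w := by
    intro w
    have hexp0 : (0 : ℝ) < Real.exp (-‖w - xp‖ / T) := Real.exp_pos _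
    have hexp1 : Real.exp (-‖w - xp‖ / T) ≤ 1 := by
      rw [Real.exp_le_one_iff]
      have : (0 : ℝ) ≤ ‖w - xp‖ / T := by positivity
      linarith [neg_div (T) (‖w - xp‖)]
    by_cases h : ‖w‖ ≤ R
    · have hg1 : g₁ w = ((1 + ‖w‖) ^ 2)⁻¹ := by simp [hg₁, hf₁, h]
      have hg2 : 0 ≤ g₂ w := by
        simp only [hg₂]; positivity
      have : (1 / (1 + ‖w‖) ^ 2) * Real.exp (-‖w - xp‖ / T) ≤ ((1 + ‖w‖) ^ 2)⁻¹ := by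
        rw [one_div]
        calc ((1 + ‖w‖) ^ 2)⁻¹ * Real.exp (-‖w - xp‖ / T)
            ≤ ((1 + ‖w‖) ^ 2)⁻¹ * 1 := by
              refine mul_le_mul_of_nonneg_left hexp1 (by positivity)
          _ = ((1 + ‖w‖) ^ 2)⁻¹ := mul_one _
      linarith [this, hg2, hg1.le, hg1.ge]
    · have hg1 : g₁ w = 0 := by simp [hg₁, hf₁, h]
      have hRw : 1 + R ≤ 1 + ‖w‖ := by linarith [lt_of_not_ge h]
      have : (1 / (1 + ‖w‖) ^ 2) * Real.exp (-‖w - xp‖ / T) ≤ g₂ w := by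
        simp only [hg₂, one_div]
        gcongr
      linarith
  -- polar coordinate computations
  have hfr : Module.finrank ℝ (EuclideanSpace ℝ (Fin 2)) = 2 := finrank_euclideanSpace_fin
  have hpolar1 : (∫ w, g₁ w) = 2 * (B * ∫ y in Ioi (0 : ℝ), y * f₁ y) := by
    have := integral_fun_norm_addHaar (volume : Measure (EuclideanSpace ℝ (Fin 2))) f₁
    rw [hfr] at this
    rw [hBdef, ← measureReal_def]
    simpa [smul_eq_mul, pow_one] using this
  have hpolar2 : (∫ w : EuclideanSpace ℝ (Fin 2), Real.exp (-‖w‖ / T))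
      = 2 * (B * ∫ y in Ioi (0 : ℝ), y * Real.exp (-y / T)) := by
    have := integral_fun_norm_addHaar (volume : Measure (EuclideanSpace ℝ (Fin 2)))
      (fun y => Real.exp (-y / T))
    rw [hfr] at this
    rw [hBdef, ← measureReal_def]
    simpa [smul_eq_mul, pow_one] using this
  have hint1 : (∫ w, g₁ w) ≤ 2 * (B * Real.log (1 + R)) := by
    rw [hpolar1]
    have := aux_log_int hR0
    have h2 : (∫ y in Ioi (0 : ℝ), y * f₁ y) ≤ Real.log (1 + R) := this
    nlinarith
  have hint2 : (∫ w, g₂ w) ≤ 2 * B := by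
    have htrans : (∫ w : EuclideanSpace ℝ (Fin 2), Real.exp (-‖w - xp‖ / T))
        = ∫ w : EuclideanSpace ℝ (Fin 2), Real.exp (-‖w‖ / T) :=
      integral_sub_right_eq_self (fun w : EuclideanSpace ℝ (Fin 2) => Real.exp (-‖w‖ / T)) xp
    have : (∫ w, g₂ w) = ((1 + R) ^ 2)⁻¹ * (2 * (B * T ^ 2)) := by
      simp only [hg₂]
      rw [integral_const_mul, htrans, hpolar2, aux_exp_int hT]
    rw [this]
    have hpos : (0 : ℝ) < (1 + R) ^ 2 := by positivity
    have hle1 : T ^ 2 * ((1 + R) ^ 2)⁻¹ ≤ 1 := by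
      rw [← div_eq_mul_inv, div_le_one hpos]
      rw [hRdef]
      nlinarith
    nlinarith [mul_le_mul_of_nonneg_left hle1 (show (0 : ℝ) ≤ 2 * B by positivity)]
  -- log bound
  have hL0 : 0 ≤ Real.log (2 + T) := Real.log_nonneg (by linarith)
  have hlog : Real.log (1 + R) ≤ 2 * Real.log (2 + T) := by
    have h1 : (1 + R : ℝ) ≤ (2 + T) ^ 2 := by rw [hRdef]; nlinarith
    calc Real.log (1 + R) ≤ Real.log ((2 + T) ^ 2) :=
          Real.log_le_log (by positivity) h1
      _ = 2 * Real.log (2 + T) := by rw [Real.log_pow]; push_cast; ring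
  calc (∫ w : EuclideanSpace ℝ (Fin 2), (1 / (1 + ‖w‖) ^ 2) * Real.exp (-‖w - xp‖ / T))
      ≤ ∫ w, (g₁ w + g₂ w) :=
        integral_mono_of_nonneg (ae_of_all _ fun w => by positivity)
          (hI₁.add hI₂) (ae_of_all _ hle)
    _ = (∫ w, g₁ w) + ∫ w, g₂ w := integral_add hI₁ hI₂
    _ ≤ 2 * (B * Real.log (1 + R)) + 2 * B := add_le_add hint1 hint2
    _ ≤ (6 * B + 1) * (1 + Real.log (2 + T)) := by
        nlinarith [mul_le_mul_of_nonneg_left hlog (show (0 : ℝ) ≤ 2 * B by positivity)]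
end

section
/- Suppose Φ : ℝ³ → ℝ satisfies |∇Φ(z)| ≤ C e^{-|z|}. Let V ≥ 2, T̂ ≥ 0, T ∈ ℝ, and v*⊥ ∈ ℝ². Then ∫₀^∞ ∫_{ℝ³} e^{-|s - T| V - |v⊥ - v*⊥| T̂} e^{-(|v₁| + |v⊥|)/4} dv ds ≤ C' / (V (1 + T̂²)) for an absolute constant C'. -/
set_option maxHeartbeats 1000000
open MeasureTheory Real Set Module

theorem aux_exp_bound_s10 {d : ℝ} (hd0 : 0 < d) (hd1 : d ≤ 1) (t : ℝ) (ht : 0 ≤ t) :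
    Real.exp (-(t * d)) ≤ 6 / d ^ 3 * (1 + t) ^ (-(3:ℝ)) := by
  have h1 : (1:ℝ) + t*d + (t*d)^2/2 + (t*d)^3/6 ≤ exp (t*d) := by
    have := Real.sum_le_exp_of_nonneg (mul_nonneg ht hd0.le) 4
    simp [Finset.sum_range_succ, Nat.factorial] at this
    linarith
  have hpos : (0:ℝ) < 1 + t := by linarith
  have hr : (1+t) ^ (-(3:ℝ)) = ((1+t)^3)⁻¹ := by
    rw [← Real.rpow_natCast (1+t) 3, ← Real.rpow_neg hpos.le]; norm_num
  rw [hr]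
  have e1 : (d + d*t)^3 ≤ (1 + t*d)^3 := by
    apply pow_le_pow_left₀ (by positivity) (by nlinarith)
  have h2 : (d*(1+t))^3/6 ≤ exp (t*d) := by nlinarith
  calc Real.exp (-(t*d)) = (exp (t*d))⁻¹ := exp_neg _
    _ ≤ ((d*(1+t))^3/6)⁻¹ := inv_anti₀ (by positivity) h2
    _ = 6/d^3 * ((1+t)^3)⁻¹ := by field_simp

theorem integrable_exp_neg_norm_mul {E : Type*} [NormedAddCommGroup E] [NormedSpace ℝ E]
    [MeasurableSpace E] [BorelSpace E] [FiniteDimensional ℝ E]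
    (μ : Measure E) [μ.IsAddHaarMeasure]
    (hE : finrank ℝ E ≤ 2) {c : ℝ} (hc : 0 < c) :
    Integrable (fun x : E => Real.exp (-(‖x‖ * c))) μ := by
  set d := min c 1 with hd
  have hd0 : 0 < d := lt_min hc one_pos
  have hd1 : d ≤ 1 := min_le_right _ _
  have hdc : d ≤ c := min_le_left _ _
  have hint : Integrable (fun x : E => 6/d^3 * (1+‖x‖) ^ (-(3:ℝ))) μ := by
    apply Integrable.const_mul
    apply integrable_one_add_norm
    exact_mod_cast lt_of_le_of_lt (Nat.cast_le.mpr hE) (by norm_num : (2:ℝ) < 3)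
  apply hint.mono'
  · exact (Real.continuous_exp.comp ((continuous_norm.mul continuous_const).neg)).aestronglyMeasurable
  · filter_upwards with x
    rw [Real.norm_eq_abs, abs_of_pos (exp_pos _)]
    calc Real.exp (-(‖x‖ * c)) ≤ Real.exp (-(‖x‖ * d)) := by
          apply Real.exp_le_exp.2; nlinarith [norm_nonneg x]
      _ ≤ 6/d^3 * (1+‖x‖) ^ (-(3:ℝ)) := aux_exp_bound_s10 hd0 hd1 _ (norm_nonneg x)

/-- Core computation for the point-charge source term `S`. -/
theorem stmt10 :
    ∃ C' > 0, ∀ (Φ : EuclideanSpace ℝ (Fin 3) → ℝ) (C : ℝ),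
      (∀ z, ‖gradient Φ z‖ ≤ C * Real.exp (-‖z‖)) →
      ∀ (V That T : ℝ) (vstar : EuclideanSpace ℝ (Fin 2)), 2 ≤ V → 0 ≤ That →
        (∫ s in Set.Ioi (0 : ℝ), ∫ v : ℝ × EuclideanSpace ℝ (Fin 2),
            Real.exp (-|s - T| * V - ‖v.2 - vstar‖ * That)
              * Real.exp (-(|v.1| + ‖v.2‖) / 4))
          ≤ C' / (V * (1 + That ^ 2)) := by
  have hfr : finrank ℝ (EuclideanSpace ℝ (Fin 2)) ≤ 2 := by
    rw [finrank_euclideanSpace_fin]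
  have hfr1 : finrank ℝ ℝ ≤ 2 := by rw [Module.finrank_self]; norm_num
  set A1 : ℝ := ∫ u : ℝ, Real.exp (-|u|) with hA1def
  set A : ℝ := ∫ x : ℝ, Real.exp (-(|x| * 4⁻¹)) with hAdef
  set B : ℝ := ∫ w : EuclideanSpace ℝ (Fin 2), Real.exp (-(‖w‖ * 4⁻¹)) with hBdef
  set D : ℝ := ∫ w : EuclideanSpace ℝ (Fin 2), Real.exp (-‖w‖) with hDdef
  have hA1 : 0 ≤ A1 := integral_nonneg fun x => (exp_pos _).le
  have hA : 0 ≤ A := integral_nonneg fun x => (exp_pos _).le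
  have hB : 0 ≤ B := integral_nonneg fun x => (exp_pos _).le
  have hD : 0 ≤ D := integral_nonneg fun x => (exp_pos _).le
  set M : ℝ := 2*B + 2*D with hMdef
  have hM : 0 ≤ M := by positivity
  refine ⟨A1 * A * M + 1, by positivity, ?_⟩
  intro Φ C hΦ V That T vstar hV hT
  have hV0 : (0:ℝ) < V := lt_of_lt_of_le two_pos hV
  have hden : (0:ℝ) < 1 + That ^ 2 := by positivity
  set f1 : ℝ → ℝ := fun x => Real.exp (-(|x| * 4⁻¹)) with hf1
  set f2 : EuclideanSpace ℝ (Fin 2) → ℝ :=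
    fun w => Real.exp (-(‖w - vstar‖ * That) + -(‖w‖ * 4⁻¹)) with hf2
  set J : ℝ := ∫ w : EuclideanSpace ℝ (Fin 2), f2 w with hJdef
  have hJ0 : 0 ≤ J := integral_nonneg fun x => (exp_pos _).le
  have hint14 : Integrable (fun w : EuclideanSpace ℝ (Fin 2) => Real.exp (-(‖w‖ * 4⁻¹))) :=
    integrable_exp_neg_norm_mul volume hfr (by norm_num)
  -- factorization of inner integral
  have hfact : ∀ s : ℝ, (∫ v : ℝ × EuclideanSpace ℝ (Fin 2),
        Real.exp (-|s - T| * V - ‖v.2 - vstar‖ * That) * Real.exp (-(|v.1| + ‖v.2‖) / 4))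
      = Real.exp (-|s - T| * V) * (A * J) := by
    intro s
    have e : ∀ v : ℝ × EuclideanSpace ℝ (Fin 2),
        Real.exp (-|s - T| * V - ‖v.2 - vstar‖ * That) * Real.exp (-(|v.1| + ‖v.2‖) / 4)
        = Real.exp (-|s - T| * V) * (f1 v.1 * f2 v.2) := by
      intro v
      simp only [hf1, hf2, ← Real.exp_add]
      congr 1; ring
    simp_rw [e]
    rw [integral_const_mul, Measure.volume_eq_prod, integral_prod_mul, hAdef, hJdef]
  -- transverse bound
  have hJle : J ≤ M / (1 + That ^ 2) := by
    rcases le_total That 1 with h1 | h1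
    · have hJB : J ≤ B := by
        rw [hJdef, hBdef]
        apply integral_mono_of_nonneg (ae_of_all _ fun w => (exp_pos _).le) hint14
        apply ae_of_all; intro w
        simp only [hf2]
        apply Real.exp_le_exp.2
        have : 0 ≤ ‖w - vstar‖ * That := mul_nonneg (norm_nonneg _) hT
        linarith
      rw [le_div_iff₀ hden]
      have hsq1 : That ^ 2 ≤ 1 := by nlinarith
      nlinarith [mul_le_mul_of_nonneg_left hsq1 hJ0]
    · have hT1 : (0:ℝ) < That := lt_of_lt_of_le one_pos h1
      have hintT : Integrable (fun u : EuclideanSpace ℝ (Fin 2) => Real.exp (-(‖u‖ * That))) :=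
        integrable_exp_neg_norm_mul volume hfr hT1
      have hintT' : Integrable
          (fun w : EuclideanSpace ℝ (Fin 2) => Real.exp (-(‖w - vstar‖ * That))) :=
        hintT.comp_sub_right vstar
      have step1 : J ≤ ∫ w : EuclideanSpace ℝ (Fin 2), Real.exp (-(‖w - vstar‖ * That)) := by
        rw [hJdef]
        apply integral_mono_of_nonneg (ae_of_all _ fun w => (exp_pos _).le) hintT'
        apply ae_of_all; intro w
        simp only [hf2]
        apply Real.exp_le_exp.2
        have : 0 ≤ ‖w‖ * 4⁻¹ := by positivity
        linarith
      have step2 : (∫ w : EuclideanSpace ℝ (Fin 2), Real.exp (-(‖w - vstar‖ * That)))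
          = ∫ w : EuclideanSpace ℝ (Fin 2), Real.exp (-(‖w‖ * That)) :=
        integral_sub_right_eq_self
          (fun u : EuclideanSpace ℝ (Fin 2) => Real.exp (-(‖u‖ * That))) vstar
      have step3 : (∫ w : EuclideanSpace ℝ (Fin 2), Real.exp (-(‖w‖ * That)))
          = (That ^ 2)⁻¹ * D := by
        have e : ∀ w : EuclideanSpace ℝ (Fin 2),
            Real.exp (-(‖w‖ * That)) = Real.exp (-‖That • w‖) := by
          intro w
          rw [norm_smul, Real.norm_eq_abs, abs_of_pos hT1, mul_comm]
        simp_rw [e]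
        rw [MeasureTheory.Measure.integral_comp_smul
          (volume : Measure (EuclideanSpace ℝ (Fin 2)))
          (fun u : EuclideanSpace ℝ (Fin 2) => Real.exp (-‖u‖)) That,
          finrank_euclideanSpace_fin, smul_eq_mul, abs_of_nonneg
            (inv_nonneg.2 (pow_nonneg hT1.le 2)), hDdef]
      have hsq : (0:ℝ) < That ^ 2 := by positivity
      calc J ≤ (That ^ 2)⁻¹ * D := by rw [← step3, ← step2]; exact step1
        _ ≤ M / (1 + That ^ 2) := by
            rw [le_div_iff₀ hden, hMdef]
            have h2 : (That ^ 2)⁻¹ * That ^ 2 = 1 := inv_mul_cancel₀ hsq.ne'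
            have h3 : (That ^ 2)⁻¹ ≤ 1 := by
              rw [inv_le_one_iff₀]; right; nlinarith
            have h4 : (That ^ 2)⁻¹ * D ≤ D := by nlinarith
            nlinarith [mul_nonneg hB (sq_nonneg That), mul_nonneg hD (sq_nonneg That)]
  -- longitudinal integrability and value
  have baseV : Integrable (fun u : ℝ => Real.exp (-(‖u‖ * V))) :=
    integrable_exp_neg_norm_mul volume hfr1 hV0
  have hsint : Integrable (fun s : ℝ => Real.exp (-|s - T| * V)) := by
    have := baseV.comp_sub_right T
    simpa [Real.norm_eq_abs, neg_mul] using this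
  have hsval : (∫ s : ℝ, Real.exp (-|s - T| * V)) = V⁻¹ * A1 := by
    have e1 : ∀ s : ℝ, Real.exp (-|s - T| * V)
        = (fun u : ℝ => Real.exp (-(|u| * V))) (s - T) := by
      intro s; simp [neg_mul]
    simp_rw [e1]
    rw [integral_sub_right_eq_self (fun u : ℝ => Real.exp (-(|u| * V))) T]
    have e2 : ∀ u : ℝ, Real.exp (-(|u| * V)) = (fun x : ℝ => Real.exp (-|x|)) (V • u) := by
      intro u; simp only [smul_eq_mul, abs_mul, abs_of_pos hV0]; ring_nf
    simp_rw [e2]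
    rw [MeasureTheory.Measure.integral_comp_smul (volume : Measure ℝ)
      (fun x : ℝ => Real.exp (-|x|)) V, Module.finrank_self, pow_one, smul_eq_mul,
      abs_of_nonneg (inv_nonneg.2 hV0.le), hA1def]
  -- put everything together
  have key : (∫ s in Set.Ioi (0:ℝ), ∫ v : ℝ × EuclideanSpace ℝ (Fin 2),
        Real.exp (-|s - T| * V - ‖v.2 - vstar‖ * That) * Real.exp (-(|v.1| + ‖v.2‖) / 4))
      ≤ (V⁻¹ * A1) * (A * (M / (1 + That ^ 2))) := by
    calc (∫ s in Set.Ioi (0:ℝ), ∫ v : ℝ × EuclideanSpace ℝ (Fin 2),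
        Real.exp (-|s - T| * V - ‖v.2 - vstar‖ * That) * Real.exp (-(|v.1| + ‖v.2‖) / 4))
        = ∫ s in Set.Ioi (0:ℝ), Real.exp (-|s - T| * V) * (A * J) := by simp_rw [hfact]
      _ ≤ ∫ s in Set.Ioi (0:ℝ), Real.exp (-|s - T| * V) * (A * (M / (1 + That ^ 2))) := by
          apply integral_mono_of_nonneg
          · exact ae_of_all _ fun s => by positivity
          · exact (hsint.restrict).mul_const _
          · apply ae_of_all; intro s
            exact mul_le_mul_of_nonneg_left (mul_le_mul_of_nonneg_left hJle hA) (exp_pos _).le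
      _ = (∫ s in Set.Ioi (0:ℝ), Real.exp (-|s - T| * V)) * (A * (M / (1 + That ^ 2))) :=
          integral_mul_const _ _
      _ ≤ (∫ s : ℝ, Real.exp (-|s - T| * V)) * (A * (M / (1 + That ^ 2))) := by
          apply mul_le_mul_of_nonneg_right
          · exact setIntegral_le_integral hsint (ae_of_all _ fun s => (exp_pos _).le)
          · positivity
      _ = (V⁻¹ * A1) * (A * (M / (1 + That ^ 2))) := by rw [hsval]
  refine key.trans ?_
  have heq : (V⁻¹ * A1) * (A * (M / (1 + That ^ 2))) = (A1 * A * M) / (V * (1 + That ^ 2)) := by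
    field_simp
  rw [heq]
  gcongr
  linarith
end

section
/- For T̂ ≥ 1 and r ≥ 0, the integral over v⊥ ∈ ℝ² of e^{-|v⊥ - v*⊥| T̂} dv⊥, where v*⊥ = x⊥/T̂ for a fixed x⊥ ∈ ℝ² with |x⊥| = r, restricted to the set {|v⊥| ≤ (1+r)/(2T̂)}, is bounded by C e^{-r/4} / T̂² ≤ C' /(T̂² (1+r²)), for absolute constants C, C'. -/
open MeasureTheory

/-- Transverse decay mechanism for the point-charge contribution. -/
theorem stmt11 :
    ∃ C > 0, ∃ C' > 0, ∀ (That r : ℝ) (xp : EuclideanSpace ℝ (Fin 2)),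
      1 ≤ That → 0 ≤ r → ‖xp‖ = r →
      (∫ vp in {vp : EuclideanSpace ℝ (Fin 2) | ‖vp‖ ≤ (1 + r) / (2 * That)},
          Real.exp (-‖vp - That⁻¹ • xp‖ * That))
        ≤ C * Real.exp (-r / 4) / That ^ 2 ∧
      C * Real.exp (-r / 4) / That ^ 2 ≤ C' / (That ^ 2 * (1 + r ^ 2)) := by
  refine ⟨1000, by norm_num, 48000, by norm_num, ?_⟩
  intro That r xp hT hr hx
  have hT0 : (0 : ℝ) < That := lt_of_lt_of_le one_pos hT
  set R : ℝ := (1 + r) / (2 * That) with hRdef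
  have hR0 : 0 ≤ R := by positivity
  -- exp lower bounds
  have hcube : Real.exp (r / 12) ^ 3 = Real.exp (r / 4) := by
    rw [← Real.exp_nat_mul]; push_cast; ring_nf
  have h3 : (r / 12 + 1) ^ 3 ≤ Real.exp (r / 12) ^ 3 :=
    pow_le_pow_left₀ (by positivity) (Real.add_one_le_exp _) 3
  have key1 : (1 + r) ^ 2 ≤ 96 * Real.exp (r / 4) := by nlinarith [h3, hcube, hr]
  have key2 : 1 + r ^ 2 ≤ 48 * Real.exp (r / 4) := by nlinarith [h3, hcube, hr]
  have hepos : 0 < Real.exp (r / 4) := Real.exp_pos _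
  -- the set is a closed ball
  have hset : {vp : EuclideanSpace ℝ (Fin 2) | ‖vp‖ ≤ R} = Metric.closedBall 0 R := by
    ext v; simp [mem_closedBall_zero_iff]
  -- volume of the ball
  have hvol : (volume (Metric.closedBall (0 : EuclideanSpace ℝ (Fin 2)) R)).toReal
      = R ^ 2 * Real.pi := by
    rw [EuclideanSpace.volume_closedBall]
    have : Real.Gamma ((Fintype.card (Fin 2) : ℝ) / 2 + 1) = 1 := by
      norm_num [Real.Gamma_two]
    rw [this]
    simp [Fintype.card_fin, Real.sq_sqrt Real.pi_pos.le,
      ← ENNReal.ofReal_pow hR0, ← ENNReal.ofReal_mul (by positivity),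
      ENNReal.toReal_ofReal (by positivity : (0:ℝ) ≤ R ^ 2 * Real.pi)]
    rw [ENNReal.toReal_ofReal (by positivity : (0:ℝ) ≤ R ^ 2),
      ENNReal.toReal_ofReal Real.pi_pos.le]
  -- pointwise bound on the set
  have hpt : ∀ vp : EuclideanSpace ℝ (Fin 2), vp ∈ Metric.closedBall (0 : EuclideanSpace ℝ (Fin 2)) R →
      ‖Real.exp (-‖vp - That⁻¹ • xp‖ * That)‖ ≤ Real.exp ((1 - r) / 2) := by
    intro vp hv
    rw [mem_closedBall_zero_iff] at hv
    rw [Real.norm_eq_abs, abs_of_pos (Real.exp_pos _)]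
    apply Real.exp_le_exp.mpr
    have h1 : ‖That⁻¹ • xp‖ = r / That := by
      rw [norm_smul, hx, norm_inv, Real.norm_eq_abs, abs_of_pos hT0]
      ring
    have h2 : ‖That⁻¹ • xp‖ - ‖vp‖ ≤ ‖vp - That⁻¹ • xp‖ := by
      rw [norm_sub_rev]; exact norm_sub_norm_le _ _
    have h4 : That * ‖vp‖ ≤ (1 + r) / 2 := by
      calc That * ‖vp‖ ≤ That * R := by gcongr
        _ = (1 + r) / 2 := by field_simp [hRdef]; rw [hRdef]; field_simp
    have h1' : ‖That⁻¹ • xp‖ * That = r := by rw [h1]; field_simp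
    nlinarith [mul_le_mul_of_nonneg_right h2 hT0.le, h1', h4, norm_nonneg vp]
  -- volume finite
  have hfin : volume (Metric.closedBall (0 : EuclideanSpace ℝ (Fin 2)) R) < ⊤ :=
    measure_closedBall_lt_top
  have hI := norm_setIntegral_le_of_norm_le_const hfin hpt
  have hI2 : (∫ vp in {vp : EuclideanSpace ℝ (Fin 2) | ‖vp‖ ≤ R},
      Real.exp (-‖vp - That⁻¹ • xp‖ * That)) ≤ Real.exp ((1 - r) / 2) * (R ^ 2 * Real.pi) := by
    rw [hset]
    calc (∫ vp in Metric.closedBall (0 : EuclideanSpace ℝ (Fin 2)) R,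
          Real.exp (-‖vp - That⁻¹ • xp‖ * That))
        ≤ ‖∫ vp in Metric.closedBall (0 : EuclideanSpace ℝ (Fin 2)) R,
          Real.exp (-‖vp - That⁻¹ • xp‖ * That)‖ := le_abs_self _
      _ ≤ Real.exp ((1 - r) / 2) * (volume (Metric.closedBall (0 : EuclideanSpace ℝ (Fin 2)) R)).toReal := hI
      _ = Real.exp ((1 - r) / 2) * (R ^ 2 * Real.pi) := by rw [hvol]
  constructor
  · refine hI2.trans ?_
    have hsplit : Real.exp ((1 - r) / 2) = Real.exp (1/2) * (Real.exp (-r / 4) * Real.exp (-r / 4)) := by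
      rw [← Real.exp_add, ← Real.exp_add]; ring_nf
    have hRsq : R ^ 2 = (1 + r) ^ 2 / (4 * That ^ 2) := by
      rw [hRdef]; field_simp; ring
    rw [hsplit, hRsq]
    set E := Real.exp (-r / 4) with hE
    have hE0 : 0 < E := Real.exp_pos _
    have hA : (1 + r) ^ 2 * E ≤ 96 := by
      rw [hE, show Real.exp (-r / 4) = (Real.exp (r / 4))⁻¹ by rw [← Real.exp_neg]; ring_nf]
      rw [mul_inv_le_iff₀ hepos]
      linarith [key1]
    have hexp12 : Real.exp ((1:ℝ)/2) ≤ 3 := by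
      calc Real.exp ((1:ℝ)/2) ≤ Real.exp 1 := Real.exp_le_exp.mpr (by norm_num)
        _ ≤ 3 := by linarith [Real.exp_one_lt_d9]
    have c1 : Real.exp ((1:ℝ)/2) * Real.pi / 4 ≤ 3 := by
      nlinarith [Real.pi_le_four, Real.exp_pos ((1:ℝ)/2), Real.pi_pos]
    have heq : Real.exp (1/2) * (E * E) * ((1 + r) ^ 2 / (4 * That ^ 2) * Real.pi)
        = (Real.exp ((1:ℝ)/2) * Real.pi / 4 * ((1 + r) ^ 2 * E) * E) / That ^ 2 := by
      field_simp
    have hb : ((1 + r) ^ 2 * E) * E ≤ 96 * E := mul_le_mul_of_nonneg_right hA hE0.le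
    have hfinal : Real.exp ((1:ℝ)/2) * Real.pi / 4 * ((1 + r) ^ 2 * E) * E ≤ 1000 * E := by
      calc Real.exp ((1:ℝ)/2) * Real.pi / 4 * ((1 + r) ^ 2 * E) * E
          = (Real.exp ((1:ℝ)/2) * Real.pi / 4) * (((1 + r) ^ 2 * E) * E) := by ring
        _ ≤ 3 * (96 * E) := mul_le_mul c1 hb (by positivity) (by norm_num)
        _ ≤ 1000 * E := by linarith [hE0.le]
    rw [heq]
    gcongr
  · rw [div_le_div_iff₀ (by positivity) (by positivity)]
    have hneg : Real.exp (-r / 4) = (Real.exp (r / 4))⁻¹ := by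
      rw [← Real.exp_neg]; ring_nf
    rw [hneg]
    have h5 : 1000 * (Real.exp (r/4))⁻¹ * (That ^ 2 * (1 + r ^ 2)) =
        That ^ 2 * (1000 * ((1 + r ^ 2) / Real.exp (r/4))) := by field_simp
    have h6 : (1 + r ^ 2) / Real.exp (r/4) ≤ 48 := by
      rw [div_le_iff₀ hepos]; linarith
    calc 1000 * (Real.exp (r/4))⁻¹ * (That ^ 2 * (1 + r ^ 2))
        = That ^ 2 * (1000 * ((1 + r ^ 2) / Real.exp (r/4))) := h5
      _ ≤ That ^ 2 * (1000 * 48) := by gcongr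
      _ = 48000 * That ^ 2 := by ring
end
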